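/- arXiv:1503.07558 — 5 statements merged into one kernel-verified Lean document; each statement's English description precedes it below -/
import Mathlib

section
/- Let X, Y be real random variables defined on a common probability space, let Z be a real random variable whose law has a density (with respect to Lebesgue measure) bounded by c > 0, and let a ≥ 1. Then d_K(Y,Z) ≤ 3 d_K(X,Z) + ‖X − Y‖_a^{a/(1+a)} (1 + 4c). -/
open MeasureTheory
open scoped ENNReal

/-- The Kolmogorov (uniform) distance between the distribution of a real random variable `f`
(under `P`) and a law `ν` on `ℝ`. -/
noncomputable def kolDist {Ω : Type*} [MeasurableSpace Ω]
    (P : Measure Ω) (f : Ω → ℝ) (ν : Measure ℝ) : ℝ :=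
  ⨆ x : ℝ, |(P {ω | f ω ≤ x}).toReal - (ν (Set.Iic x)).toReal|

/-!
Move the threshold by `δ := ‖X - Y‖_a ^ (a/(1+a))`: the event `{Y ≤ x}` is contained in
`{X ≤ x + δ} ∪ {δ ≤ |X - Y|}`, and symmetrically with `X` and `Y` exchanged and `x - δ`.
Comparing with the law `ν` costs `d_K(X, ν)` plus the `ν`-mass of an interval of length `δ`,
which is at most `c δ` by the density bound, and Markov's inequality in `L^a` bounds
`P(δ ≤ |X - Y|)` by `‖X - Y‖_a ^ a / δ ^ a = δ`. This gives
`d_K(Y, ν) ≤ d_K(X, ν) + (1 + c) δ`.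
-/

open Set

section Kolmogorov

variable {Ω : Type*} [MeasurableSpace Ω] (P : Measure Ω) (ν : Measure ℝ)

lemma abs_le_kolDist [IsFiniteMeasure P] [IsFiniteMeasure ν] (f : Ω → ℝ) (x : ℝ) :
    |P.real {ω | f ω ≤ x} - ν.real (Iic x)| ≤ kolDist P f ν := by
  refine le_ciSup (f := fun x => |P.real {ω | f ω ≤ x} - ν.real (Iic x)|)
    ⟨P.real univ + ν.real univ, ?_⟩ x
  rintro _ ⟨y, rfl⟩
  calc |P.real {ω | f ω ≤ y} - ν.real (Iic y)|
      ≤ |P.real {ω | f ω ≤ y}| + |ν.real (Iic y)| := abs_sub _ _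
    _ ≤ P.real univ + ν.real univ := by
      rw [abs_of_nonneg measureReal_nonneg, abs_of_nonneg measureReal_nonneg]
      exact add_le_add (measureReal_mono (subset_univ _)) (measureReal_mono (subset_univ _))

lemma kolDist_congr_ae {X Y : Ω → ℝ} (h : X =ᵐ[P] Y) : kolDist P X ν = kolDist P Y ν := by
  unfold kolDist
  congr 1 with x
  congr 3
  refine measure_congr ?_
  filter_upwards [h] with ω hω
  change (X ω ≤ x) = (Y ω ≤ x)
  rw [hω]

lemma measureReal_le_le_add_measureReal_abs_sub_ge [IsFiniteMeasure P] (X Y : Ω → ℝ) (x δ : ℝ) :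
    P.real {ω | Y ω ≤ x} ≤ P.real {ω | X ω ≤ x + δ} + P.real {ω | δ ≤ |X ω - Y ω|} := by
  have hsub : {ω | Y ω ≤ x} ⊆ {ω | X ω ≤ x + δ} ∪ {ω | δ ≤ |X ω - Y ω|} := by
    intro ω (hω : Y ω ≤ x)
    by_contra! h
    simp only [mem_union, mem_ofPred_eq, not_or, not_le] at h
    linarith [le_abs_self (X ω - Y ω)]
  exact (measureReal_mono hsub).trans (measureReal_union_le _ _)

lemma kolDist_le_add_of_measureReal_abs_sub_ge_le [IsFiniteMeasure P] [IsFiniteMeasure ν]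
    {X Y : Ω → ℝ} {c δ ε : ℝ}
    (hν : ∀ x, ν.real (Iic (x + δ)) ≤ ν.real (Iic x) + c * δ)
    (htail : P.real {ω | δ ≤ |X ω - Y ω|} ≤ ε) :
    kolDist P Y ν ≤ kolDist P X ν + ε + c * δ := by
  refine ciSup_le fun x => ?_
  change |P.real _ - ν.real _| ≤ _
  refine abs_sub_le_iff.2 ⟨?_, ?_⟩
  · have hX := (abs_sub_le_iff.1 (abs_le_kolDist P ν X (x + δ))).1
    linarith [measureReal_le_le_add_measureReal_abs_sub_ge P X Y x δ, hν x]
  · have hX := (abs_sub_le_iff.1 (abs_le_kolDist P ν X (x - δ))).2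
    have hYX := measureReal_le_le_add_measureReal_abs_sub_ge P Y X (x - δ) δ
    have hνx := hν (x - δ)
    simp_rw [sub_add_cancel, abs_sub_comm (Y _)] at hYX hνx
    linarith

end Kolmogorov

lemma withDensity_Ioc_le_of_le {ρ : ℝ → ℝ≥0∞} {c : ℝ} (hρ : ∀ x, ρ x ≤ ENNReal.ofReal c)
    (u v : ℝ) : volume.withDensity ρ (Ioc u v) ≤ ENNReal.ofReal c * ENNReal.ofReal (v - u) := by
  rw [withDensity_apply _ measurableSet_Ioc, ← Real.volume_Ioc, ← setLIntegral_const]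
  exact lintegral_mono hρ

lemma measureReal_withDensity_Iic_add_le {ρ : ℝ → ℝ≥0∞} [IsFiniteMeasure (volume.withDensity ρ)]
    {c δ : ℝ} (hρ : ∀ x, ρ x ≤ ENNReal.ofReal c) (hc : 0 ≤ c) (hδ : 0 ≤ δ)
    (x : ℝ) :
    (volume.withDensity ρ).real (Iic (x + δ)) ≤ (volume.withDensity ρ).real (Iic x) + c * δ := by
  have hIoc : (volume.withDensity ρ).real (Ioc x (x + δ)) ≤ c * δ := by
    refine ENNReal.toReal_le_of_le_ofReal (by positivity) ?_
    simpa [ENNReal.ofReal_mul hc] using withDensity_Ioc_le_of_le hρ x (x + δ)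
  rw [← Iic_union_Ioc_eq_Iic (le_add_of_nonneg_right hδ),
    measureReal_union (Iic_disjoint_Ioc le_rfl) measurableSet_Ioc]
  linarith

lemma meas_rpow_eLpNorm_le_enorm_le {Ω E : Type*} [MeasurableSpace Ω] [NormedAddCommGroup E]
    {μ : Measure Ω} {f : Ω → E} (hf : AEStronglyMeasurable f μ) {p : ℝ} (hp : 0 < p)
    (h0 : eLpNorm f (ENNReal.ofReal p) μ ≠ 0) (htop : eLpNorm f (ENNReal.ofReal p) μ ≠ ∞) :
    μ {ω | eLpNorm f (ENNReal.ofReal p) μ ^ (p / (1 + p)) ≤ ‖f ω‖ₑ} ≤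
      eLpNorm f (ENNReal.ofReal p) μ ^ (p / (1 + p)) := by
  set L := eLpNorm f (ENNReal.ofReal p) μ
  have hmarkov := mul_meas_ge_le_pow_eLpNorm' μ (by simpa using hp) ENNReal.ofReal_ne_top hf
    (L ^ (p / (1 + p)))
  rw [ENNReal.toReal_ofReal hp.le, ← ENNReal.rpow_mul] at hmarkov
  have hsplit : L ^ p = L ^ (p / (1 + p) * p) * L ^ (p / (1 + p)) := by
    rw [← ENNReal.rpow_add _ _ h0 htop]
    congr 1
    field_simp
    ring
  rw [hsplit] at hmarkov
  exact (ENNReal.mul_le_mul_iff_right (ENNReal.rpow_pos (pos_iff_ne_zero.2 h0) htop).ne'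
    (ENNReal.rpow_ne_top_of_nonneg (by positivity) htop)).1 hmarkov

lemma measureReal_toReal_rpow_eLpNorm_le_abs_le {Ω : Type*} [MeasurableSpace Ω]
    {μ : Measure Ω} [IsFiniteMeasure μ] {f : Ω → ℝ} (hf : AEStronglyMeasurable f μ) {p : ℝ}
    (hp : 0 < p) (h0 : eLpNorm f (ENNReal.ofReal p) μ ≠ 0)
    (htop : eLpNorm f (ENNReal.ofReal p) μ ≠ ∞) :
    μ.real {ω | (eLpNorm f (ENNReal.ofReal p) μ ^ (p / (1 + p))).toReal ≤ |f ω|} ≤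
      (eLpNorm f (ENNReal.ofReal p) μ ^ (p / (1 + p))).toReal := by
  have hmarkov := meas_rpow_eLpNorm_le_enorm_le hf hp h0 htop
  rw [← ENNReal.ofReal_toReal (ENNReal.rpow_ne_top_of_nonneg (by positivity) htop)] at hmarkov
  simp_rw [Real.enorm_eq_ofReal_abs, ENNReal.ofReal_le_ofReal_iff (abs_nonneg _)] at hmarkov
  exact ENNReal.toReal_le_of_le_ofReal ENNReal.toReal_nonneg hmarkov

/-- **Lemma 3.3.** If `X, Y` are random variables on a common probability space and `Z` is a
random variable whose law `ν` has a density bounded by `c > 0`, then for any `a ≥ 1`,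
`d_K(Y,Z) ≤ 3 d_K(X,Z) + ‖X−Y‖_a^{a/(1+a)} (1+4c)`. -/
theorem kolDist_le_of_close
    {Ω : Type*} [MeasurableSpace Ω] (P : Measure Ω) [IsProbabilityMeasure P]
    (X Y : Ω → ℝ) (hX : Measurable X) (hY : Measurable Y)
    (ν : Measure ℝ) [IsProbabilityMeasure ν]
    (ρ : ℝ → ℝ≥0∞) (c : ℝ) (hc : 0 < c)
    (hν : ν = MeasureTheory.volume.withDensity ρ)
    (hρ : ∀ x, ρ x ≤ ENNReal.ofReal c)
    (a : ℝ) (ha : 1 ≤ a) :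
    ENNReal.ofReal (kolDist P Y ν) ≤
      3 * ENNReal.ofReal (kolDist P X ν) +
        (eLpNorm (fun ω => X ω - Y ω) (ENNReal.ofReal a) P) ^ (a / (1 + a)) *
          ENNReal.ofReal (1 + 4 * c) := by
  have ha0 : 0 < a := by linarith
  have hp0 : ENNReal.ofReal a ≠ 0 := by simpa using ha0
  have hr : 0 < a / (1 + a) := by positivity
  have hXY : AEStronglyMeasurable (fun ω => X ω - Y ω) P := (hX.sub hY).aestronglyMeasurable
  set L := eLpNorm (fun ω => X ω - Y ω) (ENNReal.ofReal a) P
  rcases eq_or_ne L ∞ with hLtop | hLtop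
  · have h4c : ENNReal.ofReal (1 + 4 * c) ≠ 0 := by simpa using by positivity
    simp [hLtop, ENNReal.top_rpow_of_pos hr, ENNReal.top_mul h4c]
  rcases eq_or_ne L 0 with hL0 | hL0
  · have hXY_ae : X =ᵐ[P] Y := (sub_ae_eq_zero X Y).1 ((eLpNorm_eq_zero_iff hXY hp0).1 hL0)
    rw [kolDist_congr_ae P ν hXY_ae]
    exact le_add_right (le_mul_of_one_le_left' (by norm_num))
  set δ := (L ^ (a / (1 + a))).toReal
  have hδ : ENNReal.ofReal δ = L ^ (a / (1 + a)) :=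
    ENNReal.ofReal_toReal (ENNReal.rpow_ne_top_of_nonneg hr.le hLtop)
  have htail : P.real {ω | δ ≤ |X ω - Y ω|} ≤ δ :=
    measureReal_toReal_rpow_eLpNorm_le_abs_le hXY ha0 hL0 hLtop
  have hcdf : ∀ x, ν.real (Iic (x + δ)) ≤ ν.real (Iic x) + c * δ := by
    subst hν
    exact measureReal_withDensity_Iic_add_le hρ hc.le ENNReal.toReal_nonneg
  have hK := kolDist_le_add_of_measureReal_abs_sub_ge_le P ν hcdf htail
  calc ENNReal.ofReal (kolDist P Y ν)
      ≤ ENNReal.ofReal (kolDist P X ν) + ENNReal.ofReal (δ * (1 + c)) :=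
        (ENNReal.ofReal_le_ofReal (by linarith)).trans ENNReal.ofReal_add_le
    _ ≤ 3 * ENNReal.ofReal (kolDist P X ν) + ENNReal.ofReal δ * ENNReal.ofReal (1 + 4 * c) := by
        rw [ENNReal.ofReal_mul ENNReal.toReal_nonneg]
        gcongr
        · exact le_mul_of_one_le_left' (by norm_num)
        · linarith
    _ = _ := by rw [hδ]
end

section
/- Suppose {a_n}_{n≥1} is a sequence of nonnegative real numbers such that for some integer l ≥ 1, constants c > 0 and C > 0, and every integer n ≥ 1, a_{n+1} ≤ c Σ_{j=1}^n Σ_{r=2}^{2l} C^r a_j^{(2l−r)/(2l)}. Then a_n ≤ A n^l for all n ≥ 1, where A = max{ 2^l c^l C^{2l}, C^{2l}, a_1 }. -/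
/-!
Put `B := A^{1/(2l)}`, so that `C ≤ B` and `2cC² ≤ B²`, hence `2cC^r ≤ B^r` for `r ≥ 2`. If
`a_j ≤ A m^l = (B√m)^{2l}` for all `j ≤ m`, then `a_j^{(2l-r)/(2l)} ≤ (B√m)^{2l-r}`, and each
summand of the recursion is at most `(A/2) (√m)^{2l-r}`. Summing over `j ≤ m` and `r` gives
`a_{m+1} ≤ (A/2) · m · Σ_{s<2l-1} (√m)^s ≤ A (m+1)^l`, where the last step bounds each odd power
`(√m)^{2k+1}` by the next even one.
-/

open Finset

lemma sum_range_pow_le_two_mul_one_add_sq_pow {y : ℝ} (hy : 1 ≤ y) (k : ℕ) :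
    ∑ s ∈ range (2 * k + 1), y ^ s ≤ 2 * (1 + y ^ 2) ^ k := by
  induction k with
  | zero => norm_num
  | succ k ih =>
    rw [show 2 * (k + 1) + 1 = 2 * k + 1 + 1 + 1 by ring, sum_range_succ, sum_range_succ]
    have hodd : y ^ (2 * k + 1) ≤ y ^ (2 * k + 1 + 1) := pow_le_pow_right₀ hy (by omega)
    have heven : y ^ (2 * k + 1 + 1) ≤ y ^ 2 * (1 + y ^ 2) ^ k := by
      rw [show 2 * k + 1 + 1 = 2 + 2 * k by ring, pow_add, pow_mul]
      gcongr
      linarith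
    linear_combination ih + hodd + 2 * heven

lemma sq_mul_sum_Icc_pow_le {y : ℝ} (hy : 1 ≤ y) {l : ℕ} (hl : 1 ≤ l) :
    y ^ 2 * ∑ r ∈ Icc 2 (2 * l), y ^ (2 * l - r) ≤ 2 * (1 + y ^ 2) ^ l := by
  obtain ⟨k, rfl⟩ : ∃ k, l = k + 1 := ⟨l - 1, by omega⟩
  have hreindex : ∑ r ∈ Icc 2 (2 * (k + 1)), y ^ (2 * (k + 1) - r)
      = ∑ s ∈ range (2 * k + 1), y ^ s := by
    rw [← Ico_add_one_right_eq_Icc, sum_Ico_eq_sum_range, ← sum_range_reflect _ (2 * k + 1)]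
    refine sum_congr (congrArg range (by omega)) fun i hi => ?_
    rw [mem_range] at hi
    congr 1
    omega
  rw [hreindex]
  calc y ^ 2 * ∑ s ∈ range (2 * k + 1), y ^ s ≤ (1 + y ^ 2) * (2 * (1 + y ^ 2) ^ k) := by
        gcongr ?_ * ?_
        · linarith
        · exact sum_range_pow_le_two_mul_one_add_sq_pow hy k
    _ = 2 * (1 + y ^ 2) ^ (k + 1) := by ring

lemma two_mul_mul_pow_le {c C B : ℝ} (hC : 0 ≤ C) (hCB : C ≤ B) (hcCB : 2 * c * C ^ 2 ≤ B ^ 2)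
    {r : ℕ} (hr : 2 ≤ r) : 2 * c * C ^ r ≤ B ^ r := by
  obtain ⟨s, rfl⟩ : ∃ s, r = s + 2 := ⟨r - 2, by omega⟩
  calc 2 * c * C ^ (s + 2) = 2 * c * C ^ 2 * C ^ s := by ring
    _ ≤ B ^ 2 * B ^ s := mul_le_mul hcCB (pow_le_pow_left₀ hC hCB s) (by positivity) (by positivity)
    _ = B ^ (s + 2) := by ring

lemma mul_mul_rpow_le_half_mul_pow {N r : ℕ} {c C B y t : ℝ} (hc : 0 ≤ c) (hC : 0 ≤ C) (hCB : C ≤ B)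
    (hcCB : 2 * c * C ^ 2 ≤ B ^ 2) (hy : 0 ≤ y) (hr : 2 ≤ r) (hrN : r ≤ N) (ht : 0 ≤ t)
    (htB : t ≤ (B * y) ^ N) :
    c * (C ^ r * t ^ (((N - r : ℕ) : ℝ) / (N : ℝ))) ≤ B ^ N / 2 * y ^ (N - r) := by
  have hB : 0 ≤ B := hC.trans hCB
  have hroot : t ^ (N : ℝ)⁻¹ ≤ B * y := by
    rw [Real.rpow_inv_le_iff_of_pos ht (by positivity) (by norm_cast; omega)]
    exact_mod_cast htB
  rw [div_eq_inv_mul, Real.rpow_mul_natCast ht]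
  calc c * (C ^ r * (t ^ (N : ℝ)⁻¹) ^ (N - r)) ≤ c * (C ^ r * (B * y) ^ (N - r)) := by
        gcongr
    _ = 2 * c * C ^ r * B ^ (N - r) * y ^ (N - r) / 2 := by ring
    _ ≤ B ^ r * B ^ (N - r) * y ^ (N - r) / 2 := by
        gcongr
        exact two_mul_mul_pow_le hC hCB hcCB hr
    _ = B ^ N / 2 * y ^ (N - r) := by rw [← pow_add, Nat.add_sub_cancel' hrN]; ring

lemma mul_sum_Icc_sum_Icc_rpow_le {a : ℕ → ℝ} {l m : ℕ} {c C B : ℝ} (hl : 1 ≤ l) (hm : 1 ≤ m)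
    (hc : 0 ≤ c) (hC : 0 ≤ C) (hCB : C ≤ B) (hcCB : 2 * c * C ^ 2 ≤ B ^ 2)
    (ha : ∀ j ∈ Icc 1 m, 0 ≤ a j) (ham : ∀ j ∈ Icc 1 m, a j ≤ B ^ (2 * l) * (m : ℝ) ^ l) :
    c * ∑ j ∈ Icc 1 m, ∑ r ∈ Icc 2 (2 * l),
        C ^ r * (a j) ^ (((2 * l - r : ℕ) : ℝ) / ((2 * l : ℕ) : ℝ))
      ≤ B ^ (2 * l) * ((m + 1 : ℕ) : ℝ) ^ l := by
  set y := √(m : ℝ)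
  have hym : y ^ 2 = m := Real.sq_sqrt (Nat.cast_nonneg m)
  have hy : 1 ≤ y := Real.one_le_sqrt.2 (by exact_mod_cast hm)
  calc c * ∑ j ∈ Icc 1 m, ∑ r ∈ Icc 2 (2 * l),
          C ^ r * (a j) ^ (((2 * l - r : ℕ) : ℝ) / ((2 * l : ℕ) : ℝ))
      ≤ ∑ j ∈ Icc 1 m, ∑ r ∈ Icc 2 (2 * l), B ^ (2 * l) / 2 * y ^ (2 * l - r) := by
        rw [mul_sum]
        refine sum_le_sum fun j hj => ?_
        rw [mul_sum]
        refine sum_le_sum fun r hr => ?_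
        rw [mem_Icc] at hr
        refine mul_mul_rpow_le_half_mul_pow hc hC hCB hcCB (by positivity) hr.1 hr.2 (ha j hj) ?_
        rw [mul_pow, pow_mul y, hym]
        exact ham j hj
    _ = B ^ (2 * l) / 2 * (y ^ 2 * ∑ r ∈ Icc 2 (2 * l), y ^ (2 * l - r)) := by
        rw [sum_const, Nat.card_Icc, nsmul_eq_mul, hym, ← mul_sum]
        push_cast
        ring
    _ ≤ B ^ (2 * l) / 2 * (2 * (1 + y ^ 2) ^ l) := by
        have hB : 0 ≤ B := hC.trans hCB
        gcongr ?_ * ?_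
        exact sq_mul_sum_Icc_pow_le hy hl
    _ = B ^ (2 * l) * ((m + 1 : ℕ) : ℝ) ^ l := by rw [hym]; push_cast; ring

/-- **Lemma (recursive sequence bound).** If a nonnegative sequence satisfies
`a_{n+1} ≤ c Σ_{j=1}^n Σ_{r=2}^{2l} C^r a_j^{(2l−r)/(2l)}` for all `n ≥ 1`, then
`a_n ≤ A n^l` for all `n ≥ 1`, with `A = max(2^l c^l C^{2l}, C^{2l}, a_1)`. -/
theorem nonneg_seq_poly_bound
    (a : ℕ → ℝ) (ha : ∀ n, 0 ≤ a n)
    (l : ℕ) (hl : 1 ≤ l) (c C : ℝ) (hc : 0 < c) (hC : 0 < C)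
    (hrec : ∀ n : ℕ, 1 ≤ n →
      a (n + 1) ≤ c * ∑ j ∈ Finset.Icc 1 n, ∑ r ∈ Finset.Icc 2 (2 * l),
        C ^ r * (a j) ^ (((2 * l - r : ℕ) : ℝ) / ((2 * l : ℕ) : ℝ))) :
    ∀ n : ℕ, 1 ≤ n →
      a n ≤ max (max (2 ^ l * c ^ l * C ^ (2 * l)) (C ^ (2 * l))) (a 1) * (n : ℝ) ^ l := by
  set A := max (max (2 ^ l * c ^ l * C ^ (2 * l)) (C ^ (2 * l))) (a 1)
  have hcCA : (2 * c * C ^ 2) ^ l ≤ A := by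
    rw [mul_pow, mul_pow, ← pow_mul]
    exact (le_max_left _ _).trans (le_max_left _ _)
  have hCA : C ^ (2 * l) ≤ A := (le_max_right _ _).trans (le_max_left _ _)
  set B := A ^ ((2 * l : ℕ) : ℝ)⁻¹
  have hBA : B ^ (2 * l) = A := Real.rpow_inv_natCast_pow (by positivity) (by omega)
  have hB : 0 ≤ B := by positivity
  have hCB : C ≤ B := (pow_le_pow_iff_left₀ hC.le hB (by omega)).1 (hBA ▸ hCA)
  have hcCB : 2 * c * C ^ 2 ≤ B ^ 2 := by
    refine (pow_le_pow_iff_left₀ (by positivity) (pow_nonneg hB 2) (n := l) (by omega)).1 ?_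
    rwa [← pow_mul, hBA]
  intro n hn
  induction n using Nat.strong_induction_on with
  | _ n ih =>
  obtain rfl | ⟨m, hm, rfl⟩ : n = 1 ∨ ∃ m, 1 ≤ m ∧ n = m + 1 := by
    rcases hn.eq_or_lt with h | h
    · exact .inl h.symm
    · exact .inr ⟨n - 1, by omega, by omega⟩
  · rw [Nat.cast_one, one_pow, mul_one]
    exact le_max_right _ _
  have ham : ∀ j ∈ Icc 1 m, a j ≤ B ^ (2 * l) * (m : ℝ) ^ l := fun j hj => by
    rw [mem_Icc] at hj
    rw [hBA]
    calc a j ≤ A * (j : ℝ) ^ l := ih j (by omega) hj.1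
      _ ≤ A * (m : ℝ) ^ l := by gcongr; exact_mod_cast hj.2
  rw [← hBA]
  exact (hrec m hm).trans
    (mul_sum_Icc_sum_Icc_rpow_le hl hm hc.le hC.le hCB hcCB (fun j _ => ha j) ham)
end

section
/- Let {X(n)}_{n≥1} be i.i.d. ℝ^℘-valued random variables, let ℓ ≥ 1, and let F : (ℝ^℘)^ℓ → ℝ be Borel measurable with E F(X(1),…,X(ℓ)) = 0 and d² = E F²(X(1),…,X(ℓ)) < ∞. Then for every N ≥ 1, Var(Σ_{n=1}^N F(X(n), X(2n), …, X(ℓn))) ≤ ℓ² d² N. -/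
/-!
Write `Y n = F (X n, X (2n), …, X (ℓn))`. Since the index map `i ↦ (i + 1) n` is injective, the
law of `(X n, …, X (ℓn))` is the product of the common marginals, so every `Y n` has the law of
`Y 1` and variance `d²`. If no `(i + 1) n` equals any `(j + 1) m`, then `Y n` and `Y m` are
functions of disjoint blocks of the independent family, hence uncorrelated. For fixed `n` the remaining `m`
are among the at most `ℓ²` numbers `(i + 1) n / (j + 1)`, and each of their covariances is at most
`d²` because `2 cov[U, V] ≤ Var[U] + Var[V]`.
-/

open MeasureTheory ProbabilityTheory Finset

namespace ProbabilityTheory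

section Covariance

variable {Ω : Type*} [MeasurableSpace Ω] {μ : Measure Ω} [IsFiniteMeasure μ]

lemma two_mul_covariance_le_variance_add_variance {X Y : Ω → ℝ} (hX : MemLp X 2 μ)
    (hY : MemLp Y 2 μ) : 2 * cov[X, Y; μ] ≤ Var[X; μ] + Var[Y; μ] := by
  have h := variance_nonneg (X - Y) μ
  rw [variance_sub hX hY] at h
  linarith

lemma variance_sum_le_of_card_covariance_ne_zero_le {ι : Type*} {s : Finset ι}
    {Y : ι → Ω → ℝ} (hY : ∀ i ∈ s, MemLp (Y i) 2 μ) {v : ℝ} (hv : ∀ i ∈ s, Var[Y i; μ] ≤ v)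
    {K : ℕ} (hK : ∀ i ∈ s, #{j ∈ s | cov[Y i, Y j; μ] ≠ 0} ≤ K) :
    Var[fun ω ↦ ∑ i ∈ s, Y i ω; μ] ≤ K * v * #s := by
  classical
  have hrow : ∀ i ∈ s, ∑ j ∈ s, cov[Y i, Y j; μ] ≤ K * v := by
    intro i hi
    have hv_nonneg : 0 ≤ v := (variance_nonneg _ _).trans (hv i hi)
    rw [← sum_filter_ne_zero]
    calc ∑ j ∈ s with cov[Y i, Y j; μ] ≠ 0, cov[Y i, Y j; μ]
        ≤ #{j ∈ s | cov[Y i, Y j; μ] ≠ 0} • v := by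
          refine sum_le_card_nsmul _ _ _ fun j hj ↦ ?_
          have hj := (mem_filter.1 hj).1
          linarith [two_mul_covariance_le_variance_add_variance (hY i hi) (hY j hj), hv i hi,
            hv j hj]
      _ ≤ K * v := by
          rw [nsmul_eq_mul]
          gcongr
          exact_mod_cast hK i hi
  calc Var[fun ω ↦ ∑ i ∈ s, Y i ω; μ] = ∑ i ∈ s, ∑ j ∈ s, cov[Y i, Y j; μ] := variance_fun_sum' hY
    _ ≤ ∑ _i ∈ s, (K * v : ℝ) := sum_le_sum hrow
    _ = K * v * #s := by rw [sum_const, nsmul_eq_mul, mul_comm]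

end Covariance

section Independence

variable {Ω κ E : Type*} [MeasurableSpace Ω] [MeasurableSpace E] {P : Measure Ω}
  {X : κ → Ω → E}

lemma iIndepFun.identDistrib_pi_of_injective [IsProbabilityMeasure P] {ι : Type*}
    [Fintype ι]    (hX : ∀ n, Measurable (X n)) (hindep : iIndepFun X P)
    (hident : ∀ n m, P.map (X n) = P.map (X m)) {σ τ : ι → κ} (hσ : σ.Injective)
    (hτ : τ.Injective) :
    IdentDistrib (fun ω i ↦ X (σ i) ω) (fun ω i ↦ X (τ i) ω) P P where
  aemeasurable_fst := (measurable_pi_lambda _ fun i ↦ hX (σ i)).aemeasurable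
  aemeasurable_snd := (measurable_pi_lambda _ fun i ↦ hX (τ i)).aemeasurable
  map_eq := by
    rw [(iIndepFun_iff_map_fun_eq_pi_map fun i ↦ (hX (σ i)).aemeasurable).1 (hindep.precomp hσ),
      (iIndepFun_iff_map_fun_eq_pi_map fun i ↦ (hX (τ i)).aemeasurable).1 (hindep.precomp hτ)]
    exact congrArg Measure.pi (funext fun i ↦ hident _ _)

lemma iIndepFun.indepFun_pi_of_disjoint_range {ι ι' : Type*} [Fintype ι] [Fintype ι']
    (hX : ∀ n, Measurable (X n)) (hindep : iIndepFun X P) {σ : ι → κ} {τ : ι' → κ}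
    (hστ : Disjoint (Set.range σ) (Set.range τ)) :
    IndepFun (fun ω i ↦ X (σ i) ω) (fun ω j ↦ X (τ j) ω) P := by
  classical
  have hST : Disjoint (univ.image σ) (univ.image τ) := by
    rw [← disjoint_coe]
    simpa using hστ
  exact (hindep.indepFun_finset _ _ hST hX).comp
    (φ := fun x i ↦ x ⟨σ i, mem_image_of_mem _ (mem_univ i)⟩)
    (ψ := fun x j ↦ x ⟨τ j, mem_image_of_mem _ (mem_univ j)⟩)
    (measurable_pi_lambda _ fun _ ↦ measurable_pi_apply _)
    (measurable_pi_lambda _ fun _ ↦ measurable_pi_apply _)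

end Independence

end ProbabilityTheory

lemma card_filter_exists_eq_mul_le {ι ι' : Type*} [Fintype ι] [Fintype ι'] (f : ι → ℕ)
    (g : ι' → ℕ) (hg : ∀ j, g j ≠ 0) (s : Finset ℕ)
    [DecidablePred fun m ↦ ∃ i j, f i = g j * m] :
    #{m ∈ s | ∃ i j, f i = g j * m} ≤ Fintype.card ι * Fintype.card ι' := by
  calc #{m ∈ s | ∃ i j, f i = g j * m} ≤ #(univ.image fun p : ι × ι' ↦ f p.1 / g p.2) := by
        refine card_le_card fun m hm ↦ ?_
        obtain ⟨-, i, j, h⟩ := mem_filter.1 hm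
        exact mem_image.2 ⟨(i, j), mem_univ _, by simp [h, Nat.pos_of_ne_zero (hg j)]⟩
    _ ≤ Fintype.card ι * Fintype.card ι' := card_image_le.trans (by simp)

theorem variance_nonconventional_sum_le_general
    {Ω : Type*} [MeasurableSpace Ω] (P : Measure Ω) [IsProbabilityMeasure P]
    (wp ℓ : ℕ)
    (X : ℕ → Ω → EuclideanSpace ℝ (Fin wp)) (hXmeas : ∀ n, Measurable (X n))
    (hindep : iIndepFun X P)
    (hident : ∀ n m : ℕ, P.map (X n) = P.map (X m))
    (F : (Fin ℓ → EuclideanSpace ℝ (Fin wp)) → ℝ) (hF : Measurable F)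
    (hmean : ∫ ω, F (fun i => X ((i : ℕ) + 1) ω) ∂P = 0)
    (d2 : ℝ) (hd2 : d2 = ∫ ω, (F (fun i => X ((i : ℕ) + 1) ω)) ^ 2 ∂P)
    (hL2 : MemLp (fun ω => F (fun i => X ((i : ℕ) + 1) ω)) 2 P) :
    ∀ N : ℕ,
      variance (fun ω => ∑ n ∈ Finset.Icc 1 N, F (fun i => X (((i : ℕ) + 1) * n) ω)) P ≤
        (ℓ : ℝ) ^ 2 * d2 * N := by
  intro N
  set σ : ℕ → Fin ℓ → ℕ := fun n i ↦ ((i : ℕ) + 1) * n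
  set Y : ℕ → Ω → ℝ := fun n ω ↦ F fun i ↦ X (σ n i) ω
  have hσ : ∀ n ∈ Icc 1 N, (σ n).Injective := fun n hn i j h ↦
    Fin.val_injective (Nat.succ_injective (Nat.eq_of_mul_eq_mul_right (mem_Icc.1 hn).1 h))
  have hlaw : ∀ n ∈ Icc 1 N, IdentDistrib (Y n) (fun ω ↦ F fun i ↦ X ((i : ℕ) + 1) ω) P P :=
    fun n hn ↦ (hindep.identDistrib_pi_of_injective hXmeas hident (hσ n hn)
      fun i j h ↦ Fin.val_injective (Nat.succ_injective h)).comp hF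
  have hY : ∀ n ∈ Icc 1 N, MemLp (Y n) 2 P := fun n hn ↦ (hlaw n hn).memLp_iff.2 hL2
  have hvar : ∀ n ∈ Icc 1 N, Var[Y n; P] ≤ d2 := fun n hn ↦ by
    rw [(hlaw n hn).variance_eq, variance_eq_sub hL2, hd2]
    simp [hmean]
  have hdep : ∀ n ∈ Icc 1 N, ∀ m ∈ Icc 1 N, cov[Y n, Y m; P] ≠ 0 →
      ∃ i j : Fin ℓ, ((i : ℕ) + 1) * n = ((j : ℕ) + 1) * m := by
    intro n hn m hm hcov
    by_contra! hdisj
    refine hcov (IndepFun.covariance_eq_zero ?_ (hY n hn) (hY m hm))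
    refine (hindep.indepFun_pi_of_disjoint_range hXmeas ?_).comp hF hF
    exact Set.disjoint_left.2 fun k ⟨i, hi⟩ ⟨j, hj⟩ ↦ hdisj i j (hi.trans hj.symm)
  have hcard : ∀ n ∈ Icc 1 N, #{m ∈ Icc 1 N | cov[Y n, Y m; P] ≠ 0} ≤ ℓ ^ 2 := fun n hn ↦
    calc #{m ∈ Icc 1 N | cov[Y n, Y m; P] ≠ 0}
        ≤ #{m ∈ Icc 1 N | ∃ i j : Fin ℓ, ((i : ℕ) + 1) * n = ((j : ℕ) + 1) * m} :=
          card_le_card fun m hm ↦ by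
            rw [mem_filter] at hm ⊢
            exact ⟨hm.1, hdep n hn m hm.1 hm.2⟩
      _ ≤ Fintype.card (Fin ℓ) * Fintype.card (Fin ℓ) :=
          card_filter_exists_eq_mul_le _ _ (fun _ ↦ Nat.succ_ne_zero _) _
      _ = ℓ ^ 2 := by simp [sq]
  simpa using variance_sum_le_of_card_covariance_ne_zero_le hY hvar hcard

/-- **Upper variance bound in the i.i.d. case.** If `{X(n)}` are i.i.d., `E F(X(1),…,X(ℓ)) = 0`
and `d² = E F²(X(1),…,X(ℓ)) < ∞`, then `Var(Σ_{n=1}^N F(X(n),…,X(ℓn))) ≤ ℓ² d² N`. -/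
theorem variance_nonconventional_sum_le
    {Ω : Type*} [MeasurableSpace Ω] (P : Measure Ω) [IsProbabilityMeasure P]
    (wp ℓ : ℕ) (hwp : 0 < wp) (hℓ : 1 ≤ ℓ)
    (X : ℕ → Ω → EuclideanSpace ℝ (Fin wp)) (hXmeas : ∀ n, Measurable (X n))
    (hindep : iIndepFun X P)
    (hident : ∀ n m : ℕ, P.map (X n) = P.map (X m))
    (F : (Fin ℓ → EuclideanSpace ℝ (Fin wp)) → ℝ) (hF : Measurable F)
    (hmean : ∫ ω, F (fun i => X ((i : ℕ) + 1) ω) ∂P = 0)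
    (d2 : ℝ) (hd2 : d2 = ∫ ω, (F (fun i => X ((i : ℕ) + 1) ω)) ^ 2 ∂P)
    (hL2 : MemLp (fun ω => F (fun i => X ((i : ℕ) + 1) ω)) 2 P) :
    ∀ N : ℕ,
      variance (fun ω => ∑ n ∈ Finset.Icc 1 N, F (fun i => X (((i : ℕ) + 1) * n) ω)) P ≤
        (ℓ : ℝ) ^ 2 * d2 * N :=
  variance_nonconventional_sum_le_general P wp ℓ X hXmeas hindep hident F hF hmean d2 hd2 hL2
end

section
/- Let Z₁, Z₂, Z₃, Z₄ be real random variables such that Z₁ and Z₂ are independent and Z₃ and Z₄ are independent (the two pairs need not be defined on the same probability space). Then d_K(Z₁+Z₂, Z₃+Z₄) ≤ d_K(Z₁,Z₃) + d_K(Z₂,Z₄). -/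
/-!
Independence turns the law of a sum into the convolution of the laws, and the cdf of `μ ∗ ρ` at `x`
is the `ρ`-average of `cdf μ (x - ·)`. Hence convolving both measures with the same `ρ` does not
increase the sup-distance of their cdfs, and going from `μ₁ ∗ μ₂` to `ν₁ ∗ ν₂` through `μ₁ ∗ ν₂`
costs at most `d_K(μ₂, ν₂) + d_K(μ₁, ν₁)`.
-/

open MeasureTheory
open scoped ENNReal

/-- Kolmogorov (uniform) distance between a real random variable `f` on `(Ω₁,P₁)` and a real
random variable `g` on `(Ω₂,P₂)`; it depends only on the two laws. -/
noncomputable def kolDist₂ {Ω₁ Ω₂ : Type*} [MeasurableSpace Ω₁] [MeasurableSpace Ω₂]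
    (P₁ : Measure Ω₁) (f : Ω₁ → ℝ) (P₂ : Measure Ω₂) (g : Ω₂ → ℝ) : ℝ :=
  ⨆ x : ℝ, |(P₁ {ω | f ω ≤ x}).toReal - (P₂ {ω | g ω ≤ x}).toReal|

namespace ProbabilityTheory

open Set

noncomputable def kolmogorovDist (μ ν : Measure ℝ) : ℝ := ⨆ x, |cdf μ x - cdf ν x|

lemma abs_cdf_sub_cdf_le_one (μ ν : Measure ℝ) (x : ℝ) : |cdf μ x - cdf ν x| ≤ 1 :=
  abs_sub_le_iff.2 ⟨by linarith [cdf_le_one μ x, cdf_nonneg ν x],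
    by linarith [cdf_le_one ν x, cdf_nonneg μ x]⟩

lemma abs_cdf_sub_cdf_le_kolmogorovDist (μ ν : Measure ℝ) (x : ℝ) :
    |cdf μ x - cdf ν x| ≤ kolmogorovDist μ ν :=
  le_ciSup (f := fun x => |cdf μ x - cdf ν x|)
    ⟨1, by rintro _ ⟨y, rfl⟩; exact abs_cdf_sub_cdf_le_one μ ν y⟩ x

lemma kolmogorovDist_le {μ ν : Measure ℝ} {c : ℝ} (h : ∀ x, |cdf μ x - cdf ν x| ≤ c) :
    kolmogorovDist μ ν ≤ c :=
  ciSup_le h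

lemma kolmogorovDist_triangle (μ ν ρ : Measure ℝ) :
    kolmogorovDist μ ρ ≤ kolmogorovDist μ ν + kolmogorovDist ν ρ :=
  kolmogorovDist_le fun x => (abs_sub_le _ (cdf ν x) _).trans <|
    add_le_add (abs_cdf_sub_cdf_le_kolmogorovDist μ ν x) (abs_cdf_sub_cdf_le_kolmogorovDist ν ρ x)

lemma cdf_conv (μ ν : Measure ℝ) [IsProbabilityMeasure μ] [IsProbabilityMeasure ν] (x : ℝ) :
    cdf (μ ∗ ν) x = ∫ y, cdf μ (x - y) ∂ν := by
  have hslice (y : ℝ) :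
      (fun a => (a, y)) ⁻¹' ((fun p : ℝ × ℝ => p.1 + p.2) ⁻¹' Iic x) = Iic (x - y) := by
    ext a; simp [le_sub_iff_add_le]
  have hmono : Antitone fun y => μ (Iic (x - y)) :=
    fun a b hab => measure_mono (Iic_subset_Iic.2 (by linarith))
  rw [cdf_eq_real, measureReal_def, Measure.conv,
    Measure.map_apply measurable_add measurableSet_Iic,
    Measure.prod_apply_symm (measurable_add measurableSet_Iic)]
  simp_rw [hslice]
  rw [← integral_toReal hmono.measurable.aemeasurable (.of_forall fun _ => measure_lt_top _ _)]
  simp_rw [cdf_eq_real, measureReal_def]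

lemma integrable_cdf_comp_sub (μ ν : Measure ℝ) [IsFiniteMeasure ν] (x : ℝ) :
    Integrable (fun y => cdf μ (x - y)) ν :=
  .of_bound ((cdf μ).mono.measurable.comp (measurable_const.sub measurable_id)).aestronglyMeasurable
    1 (.of_forall fun y => by rw [Real.norm_of_nonneg (cdf_nonneg _ _)]; exact cdf_le_one _ _)

lemma kolmogorovDist_conv_le (μ ν ρ : Measure ℝ) [IsProbabilityMeasure μ] [IsProbabilityMeasure ν]
    [IsProbabilityMeasure ρ] : kolmogorovDist (μ ∗ ρ) (ν ∗ ρ) ≤ kolmogorovDist μ ν := by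
  refine kolmogorovDist_le fun x => ?_
  rw [cdf_conv, cdf_conv,
    ← integral_sub (integrable_cdf_comp_sub μ ρ x) (integrable_cdf_comp_sub ν ρ x)]
  simpa using norm_integral_le_of_norm_le_const (μ := ρ)
    (f := fun y => cdf μ (x - y) - cdf ν (x - y))
    (.of_forall fun y => abs_cdf_sub_cdf_le_kolmogorovDist μ ν (x - y))

lemma kolmogorovDist_conv_le_add (μ₁ μ₂ ν₁ ν₂ : Measure ℝ) [IsProbabilityMeasure μ₁]
    [IsProbabilityMeasure μ₂] [IsProbabilityMeasure ν₁] [IsProbabilityMeasure ν₂] :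
    kolmogorovDist (μ₁ ∗ μ₂) (ν₁ ∗ ν₂) ≤ kolmogorovDist μ₁ ν₁ + kolmogorovDist μ₂ ν₂ :=
  calc kolmogorovDist (μ₁ ∗ μ₂) (ν₁ ∗ ν₂)
      ≤ kolmogorovDist (μ₁ ∗ μ₂) (μ₁ ∗ ν₂) + kolmogorovDist (μ₁ ∗ ν₂) (ν₁ ∗ ν₂) :=
        kolmogorovDist_triangle _ _ _
    _ ≤ kolmogorovDist μ₂ ν₂ + kolmogorovDist μ₁ ν₁ := by
        refine add_le_add ?_ (kolmogorovDist_conv_le _ _ _)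
        rw [Measure.conv_comm μ₁ μ₂, Measure.conv_comm μ₁ ν₂]
        exact kolmogorovDist_conv_le _ _ _
    _ = kolmogorovDist μ₁ ν₁ + kolmogorovDist μ₂ ν₂ := add_comm _ _

lemma cdf_map {Ω : Type*} [MeasurableSpace Ω] (P : Measure Ω) [IsProbabilityMeasure P]
    {f : Ω → ℝ} (hf : Measurable f) (x : ℝ) : cdf (P.map f) x = (P {ω | f ω ≤ x}).toReal := by
  have := Measure.isProbabilityMeasure_map (μ := P) hf.aemeasurable
  rw [cdf_eq_real, measureReal_def, Measure.map_apply hf measurableSet_Iic]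
  rfl

end ProbabilityTheory

lemma kolDist₂_eq_kolmogorovDist_map {Ω₁ Ω₂ : Type*} [MeasurableSpace Ω₁] [MeasurableSpace Ω₂]
    (P₁ : Measure Ω₁) [IsProbabilityMeasure P₁] (P₂ : Measure Ω₂) [IsProbabilityMeasure P₂]
    {f : Ω₁ → ℝ} {g : Ω₂ → ℝ} (hf : Measurable f) (hg : Measurable g) :
    kolDist₂ P₁ f P₂ g = ProbabilityTheory.kolmogorovDist (P₁.map f) (P₂.map g) := by
  simp only [kolDist₂, ProbabilityTheory.kolmogorovDist, ProbabilityTheory.cdf_map _ hf,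
    ProbabilityTheory.cdf_map _ hg]

/-- If `Z₁, Z₂` are independent and `Z₃, Z₄` are independent (the two pairs possibly living on
different probability spaces), then `d_K(Z₁+Z₂, Z₃+Z₄) ≤ d_K(Z₁,Z₃) + d_K(Z₂,Z₄)`. -/
theorem kolDist_add_le_of_indep
    {Ω₁ Ω₂ : Type*} [MeasurableSpace Ω₁] [MeasurableSpace Ω₂]
    (P₁ : Measure Ω₁) [IsProbabilityMeasure P₁]
    (P₂ : Measure Ω₂) [IsProbabilityMeasure P₂]
    (Z₁ Z₂ : Ω₁ → ℝ) (Z₃ Z₄ : Ω₂ → ℝ)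
    (h₁ : Measurable Z₁) (h₂ : Measurable Z₂) (h₃ : Measurable Z₃) (h₄ : Measurable Z₄)
    (hindep₁ : ProbabilityTheory.IndepFun Z₁ Z₂ P₁)
    (hindep₂ : ProbabilityTheory.IndepFun Z₃ Z₄ P₂) :
    kolDist₂ P₁ (fun ω => Z₁ ω + Z₂ ω) P₂ (fun ω => Z₃ ω + Z₄ ω) ≤
      kolDist₂ P₁ Z₁ P₂ Z₃ + kolDist₂ P₁ Z₂ P₂ Z₄ := by
  change kolDist₂ P₁ (Z₁ + Z₂) P₂ (Z₃ + Z₄) ≤ _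
  have := Measure.isProbabilityMeasure_map (μ := P₁) h₁.aemeasurable
  have := Measure.isProbabilityMeasure_map (μ := P₁) h₂.aemeasurable
  have := Measure.isProbabilityMeasure_map (μ := P₂) h₃.aemeasurable
  have := Measure.isProbabilityMeasure_map (μ := P₂) h₄.aemeasurable
  rw [kolDist₂_eq_kolmogorovDist_map _ _ (h₁.add h₂) (h₃.add h₄),
    kolDist₂_eq_kolmogorovDist_map _ _ h₁ h₃, kolDist₂_eq_kolmogorovDist_map _ _ h₂ h₄,
    hindep₁.map_add_eq_map_conv_map h₁ h₂, hindep₂.map_add_eq_map_conv_map h₃ h₄]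
  exact ProbabilityTheory.kolmogorovDist_conv_le_add _ _ _ _
end

section
/- Let ℓ, l, N_l be positive integers. For each integer r ≥ 1 let B_r = ℕ ∩ (l(r−1), lr], and for 1 ≤ r ≤ N_l set A_r = {1 ≤ r' ≤ N_l : there exist 1 ≤ s,t ≤ ℓ², n ∈ B_r and n' ∈ B_{r'} with |sn − tn'| < l}. Then for every 1 ≤ r ≤ N_l the cardinality of A_r is at most 4ℓ⁵. -/
/-!
If `n ∈ B_r`, `n' ∈ B_{r'}` and `|s n - t n'| < l`, comparing `s n` and `t n'` with the ends of the
blocks gives `s (r - 1) ≤ t r'` and `t (r' - 1) ≤ s r`, so `r'` lies in a window of at most `s / t + 3`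
integers determined by `(s, t)`. Summing over the pairs with `s, t ≤ ℓ²` and splitting the
harmonic-type sum `∑_{t ≤ ℓ²} ℓ² / t` at `t = ℓ` gives at most `ℓ² · 4ℓ³`.
-/

open Finset

theorem mul_le_mul_of_abs_sub_lt {l a b s t n n' : ℕ} (hn : l * a < n) (hn' : n' ≤ l * b)
    (h : |(s * n : ℤ) - (t * n' : ℤ)| < (l : ℤ)) : s * a ≤ t * b := by
  have hsn : s * n < t * n' + l := by
    have := (abs_lt.mp h).2
    omega
  have : l * (s * a) < l * (t * b + 1) :=
    calc l * (s * a) = s * (l * a) := by ring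
      _ ≤ s * n := Nat.mul_le_mul_left s hn.le
      _ < t * n' + l := hsn
      _ ≤ t * (l * b) + l := by gcongr
      _ = l * (t * b + 1) := by ring
  exact Nat.lt_succ_iff.mp (Nat.lt_of_mul_lt_mul_left this)

def window (s t r : ℕ) : Finset ℕ :=
  Icc (s * (r - 1) / t) (s * r / t + 1)

theorem mem_window {s t r r' : ℕ} (ht : 0 < t) (hlow : s * (r - 1) ≤ t * r')
    (hup : t * (r' - 1) ≤ s * r) : r' ∈ window s t r := by
  have : r' - 1 ≤ s * r / t := (Nat.le_div_iff_mul_le ht).mpr (by linarith)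
  exact mem_Icc.mpr ⟨Nat.div_le_of_le_mul hlow, by omega⟩

theorem card_window_le (s t r : ℕ) : #(window s t r) ≤ s / t + 3 := by
  have : s * r / t ≤ s * (r - 1) / t + s / t + 1 :=
    calc s * r / t ≤ (s * (r - 1) + s) / t :=
          Nat.div_le_div_right (by rw [← Nat.mul_add_one]; gcongr; omega)
      _ ≤ _ := Nat.add_div_le_div_add_div_add_one _ _ _
  rw [window, Nat.card_Icc]
  generalize s * r / t = c, s * (r - 1) / t = a, s / t = b at this ⊢
  omega

theorem sum_Ioc_sq_div_add_three_le (ℓ : ℕ) : ∑ t ∈ Ioc 0 (ℓ ^ 2), (ℓ ^ 2 / t + 3) ≤ 4 * ℓ ^ 3 := by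
  obtain ⟨d, hd⟩ : ∃ d, ℓ ^ 2 = ℓ + d := Nat.exists_eq_add_of_le (Nat.le_self_pow two_ne_zero ℓ)
  have small : ∑ t ∈ Ioc 0 ℓ, (ℓ ^ 2 / t + 3) ≤ ℓ * (ℓ ^ 2 + 3) := by
    simpa using sum_le_card_nsmul _ _ _ fun t (_ : t ∈ Ioc 0 ℓ) ↦
      Nat.add_le_add_right (Nat.div_le_self (ℓ ^ 2) t) 3
  have large : ∑ t ∈ Ioc ℓ (ℓ ^ 2), (ℓ ^ 2 / t + 3) ≤ d * (ℓ + 3) := by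
    have : ∀ t ∈ Ioc ℓ (ℓ ^ 2), ℓ ^ 2 / t + 3 ≤ ℓ + 3 := fun t ht ↦ Nat.add_le_add_right
      (Nat.div_le_of_le_mul (by rw [sq]; gcongr; exact (mem_Ioc.mp ht).1.le)) 3
    simpa [hd] using sum_le_card_nsmul _ _ _ this
  rw [← sum_Ioc_consecutive _ (Nat.zero_le ℓ) (by omega)]
  rcases Nat.eq_zero_or_pos ℓ with rfl | hℓ
  · simp
  · nlinarith

theorem card_Ar_le_general (ℓ l Nl : ℕ) :
    ∀ r : ℕ, 1 ≤ r → r ≤ Nl →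
      Set.ncard {r' : ℕ | 1 ≤ r' ∧ r' ≤ Nl ∧
          ∃ s t n n' : ℕ, 1 ≤ s ∧ s ≤ ℓ ^ 2 ∧ 1 ≤ t ∧ t ≤ ℓ ^ 2 ∧
            l * (r - 1) < n ∧ n ≤ l * r ∧ l * (r' - 1) < n' ∧ n' ≤ l * r' ∧
            |(s * n : ℤ) - (t * n' : ℤ)| < (l : ℤ)} ≤ 4 * ℓ ^ 5 := by
  intro r _ _
  set P := Ioc 0 (ℓ ^ 2) ×ˢ Ioc 0 (ℓ ^ 2)
  calc _ ≤ #(P.biUnion fun p ↦ window p.1 p.2 r) := by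
        rw [← Set.ncard_coe_finset]
        refine Set.ncard_le_ncard ?_ (finite_toSet _)
        rintro r' ⟨-, -, s, t, n, n', hs, hsm, ht, htm, hn, hnr, hn', hnr', h⟩
        have hlow := mul_le_mul_of_abs_sub_lt hn hnr' h
        have hup := mul_le_mul_of_abs_sub_lt hn' hnr (by rwa [abs_sub_comm])
        refine mem_biUnion.mpr ⟨(s, t), ?_, mem_window ht hlow hup⟩
        simp only [P, mem_product, mem_Ioc]
        omega
    _ ≤ ∑ p ∈ P, (ℓ ^ 2 / p.2 + 3) := card_biUnion_le.trans <| sum_le_sum fun p hp ↦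
        (card_window_le _ _ _).trans <| by
          have := (mem_Ioc.mp (mem_product.mp hp).1).2
          gcongr
    _ = ℓ ^ 2 * ∑ t ∈ Ioc 0 (ℓ ^ 2), (ℓ ^ 2 / t + 3) := by simp [P, sum_product]
    _ ≤ ℓ ^ 2 * (4 * ℓ ^ 3) := Nat.mul_le_mul_left _ (sum_Ioc_sq_div_add_three_le ℓ)
    _ = 4 * ℓ ^ 5 := by ring

/-- **Counting lemma from Lemma 5.3.** With `B_r = ℕ ∩ (l(r−1), lr]` and
`A_r = {1 ≤ r' ≤ N_l : min{|sn − tn'| : 1 ≤ s,t ≤ ℓ², n ∈ B_r, n' ∈ B_{r'}} < l}`,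
one has `|A_r| ≤ 4ℓ⁵` for every `1 ≤ r ≤ N_l`. -/
theorem card_Ar_le (ℓ l Nl : ℕ) (hℓ : 0 < ℓ) (hl : 0 < l) :
    ∀ r : ℕ, 1 ≤ r → r ≤ Nl →
      Set.ncard {r' : ℕ | 1 ≤ r' ∧ r' ≤ Nl ∧
          ∃ s t n n' : ℕ, 1 ≤ s ∧ s ≤ ℓ ^ 2 ∧ 1 ≤ t ∧ t ≤ ℓ ^ 2 ∧
            l * (r - 1) < n ∧ n ≤ l * r ∧ l * (r' - 1) < n' ∧ n' ≤ l * r' ∧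
            |(s * n : ℤ) - (t * n' : ℤ)| < (l : ℤ)} ≤ 4 * ℓ ^ 5 :=
  card_Ar_le_general ℓ l Nl
end
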